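/- arXiv:1511.07074 — 6 statements merged into one kernel-verified Lean document; each statement's English description precedes it below -/
import Mathlib

section
/- In the calculus with MP, IPC1, IPC2, and the Peirce scheme IPC0 (((A ⊃ B) ⊃ A) ⊃ A), every instance of the scheme IPC0': (A ⊃ Q) ⊃ (((A ⊃ B) ⊃ Q) ⊃ Q) is a theorem. -/
/-!
Work under the hypotheses `f : A ⊃ Q` and `g : (A ⊃ B) ⊃ Q` and apply Peirce's law in the
instance `((Q ⊃ B) ⊃ Q) ⊃ Q`. Given `h : Q ⊃ B`, the map `a ↦ h (f a)` is a proof of `A ⊃ B`,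
so `g` yields `Q`. The hypotheses are discharged by the deduction theorem.
-/

inductive Fm : Type
  | var : Nat → Fm
  | imp : Fm → Fm → Fm

inductive ThmP : Fm → Prop
  | ipc1 (A B : Fm) : ThmP (A.imp (B.imp A))
  | ipc2 (A B C : Fm) : ThmP ((A.imp (B.imp C)).imp ((A.imp B).imp (A.imp C)))
  | ipc0 (A B : Fm) : ThmP (((A.imp B).imp A).imp A)
  | mp {A B : Fm} : ThmP (A.imp B) → ThmP A → ThmP B

theorem ThmP.imp_self (A : Fm) : ThmP (A.imp A) :=
  .mp (.mp (.ipc2 A (A.imp A) A) (.ipc1 A (A.imp A))) (.ipc1 A A)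

inductive Derives (Γ : Set Fm) : Fm → Prop
  | hyp {A : Fm} : A ∈ Γ → Derives Γ A
  | thm {A : Fm} : ThmP A → Derives Γ A
  | mp {A B : Fm} : Derives Γ (A.imp B) → Derives Γ A → Derives Γ B

namespace Derives

theorem imp_intro {Γ : Set Fm} {A B : Fm} (h : Derives (insert A Γ) B) :
    Derives Γ (A.imp B) := by
  induction h with
  | hyp hB =>
    rcases hB with rfl | hB
    · exact .thm (.imp_self _)
    · exact .mp (.thm (.ipc1 _ _)) (.hyp hB)
  | thm hB => exact .mp (.thm (.ipc1 _ _)) (.thm hB)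
  | mp _ _ ihCB ihC => exact .mp (.mp (.thm (.ipc2 _ _ _)) ihCB) ihC

theorem thmP_of_empty {A : Fm} (h : Derives ∅ A) : ThmP A := by
  induction h with
  | hyp hA => exact absurd hA (Set.notMem_empty _)
  | thm hA => exact hA
  | mp _ _ ihAB ihA => exact .mp ihAB ihA

end Derives

theorem stmt_3 (A B Q : Fm) :
    ThmP ((A.imp Q).imp (((A.imp B).imp Q).imp Q)) := by
  refine Derives.thmP_of_empty (.imp_intro (.imp_intro ?_))
  refine .mp (.thm (.ipc0 Q B)) (.imp_intro ?_)
  refine .mp (A := A.imp B) (.hyp (by simp)) (.imp_intro ?_)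
  exact .mp (A := Q) (.hyp (by simp)) (.mp (A := A) (.hyp (by simp)) (.hyp (by simp)))
end

section
/- The Peirce axiom scheme IPC0 is equivalent to the scheme IPC0': in the presence of MP, IPC1, and IPC2, all instances of ((A ⊃ B) ⊃ A) ⊃ A are theorems if and only if all instances of (A ⊃ Q) ⊃ (((A ⊃ B) ⊃ Q) ⊃ Q) are theorems. -/
inductive ThmQ : Fm → Prop
  | ipc1 (A B : Fm) : ThmQ (A.imp (B.imp A))
  | ipc2 (A B C : Fm) : ThmQ ((A.imp (B.imp C)).imp ((A.imp B).imp (A.imp C)))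
  | ipc0' (A B Q : Fm) : ThmQ ((A.imp Q).imp (((A.imp B).imp Q).imp Q))
  | mp {A B : Fm} : ThmQ (A.imp B) → ThmQ A → ThmQ B

local infixr:25 " ⇒ " => Fm.imp

structure IsKSLogic (T : Fm → Prop) : Prop where
  k (A B : Fm) : T (A ⇒ B ⇒ A)
  s (A B C : Fm) : T ((A ⇒ B ⇒ C) ⇒ (A ⇒ B) ⇒ A ⇒ C)
  mp {A B : Fm} : T (A ⇒ B) → T A → T B

namespace IsKSLogic

variable {T : Fm → Prop} (hT : IsKSLogic T)
include hT

theorem imp_self (A : Fm) : T (A ⇒ A) :=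
  hT.mp (hT.mp (hT.s A (A ⇒ A) A) (hT.k A (A ⇒ A))) (hT.k A A)

theorem imp_trans {X Y Z : Fm} (hXY : T (X ⇒ Y)) (hYZ : T (Y ⇒ Z)) : T (X ⇒ Z) :=
  hT.mp (hT.mp (hT.s X Y Z) (hT.mp (hT.k (Y ⇒ Z) X) hYZ)) hXY

theorem imp_comm {X Y Z : Fm} (h : T (X ⇒ Y ⇒ Z)) : T (Y ⇒ X ⇒ Z) :=
  hT.imp_trans (hT.k Y X) (hT.mp (hT.s X Y Z) h)

theorem imp_imp_imp_left (X Y Z : Fm) : T ((Y ⇒ Z) ⇒ (X ⇒ Y) ⇒ X ⇒ Z) :=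
  hT.mp (hT.mp (hT.s _ _ _) (hT.mp (hT.k _ _) (hT.s X Y Z))) (hT.k (Y ⇒ Z) X)

theorem imp_imp_imp_right (X Y Z : Fm) : T ((X ⇒ Y) ⇒ (Y ⇒ Z) ⇒ X ⇒ Z) :=
  hT.imp_comm (hT.imp_imp_imp_left X Y Z)

end IsKSLogic

theorem ThmP.isKSLogic : IsKSLogic ThmP := ⟨ThmP.ipc1, ThmP.ipc2, ThmP.mp⟩

theorem ThmQ.isKSLogic : IsKSLogic ThmQ := ⟨ThmQ.ipc1, ThmQ.ipc2, ThmQ.mp⟩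

theorem ThmP.ipc0' (A B Q : Fm) : ThmP ((A ⇒ Q) ⇒ ((A ⇒ B) ⇒ Q) ⇒ Q) := by
  have h := ThmP.isKSLogic
  have contra₁ : ThmP ((A ⇒ Q) ⇒ (Q ⇒ B) ⇒ A ⇒ B) := h.imp_imp_imp_right A Q B
  have contra₂ : ThmP (((Q ⇒ B) ⇒ A ⇒ B) ⇒ ((A ⇒ B) ⇒ Q) ⇒ (Q ⇒ B) ⇒ Q) :=
    h.imp_imp_imp_right (Q ⇒ B) (A ⇒ B) Q
  have peirce : ThmP ((((A ⇒ B) ⇒ Q) ⇒ (Q ⇒ B) ⇒ Q) ⇒ ((A ⇒ B) ⇒ Q) ⇒ Q) :=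
    ThmP.mp (h.imp_imp_imp_left ((A ⇒ B) ⇒ Q) ((Q ⇒ B) ⇒ Q) Q) (ThmP.ipc0 Q B)
  exact h.imp_trans contra₁ (h.imp_trans contra₂ peirce)

theorem ThmQ.ipc0 (A B : Fm) : ThmQ (((A ⇒ B) ⇒ A) ⇒ A) :=
  ThmQ.mp (ThmQ.ipc0' A B A) (ThmQ.isKSLogic.imp_self A)

theorem stmt_5 :
    (∀ A B Q : Fm, ThmP ((A.imp Q).imp (((A.imp B).imp Q).imp Q))) ∧
    (∀ A B : Fm, ThmQ (((A.imp B).imp A).imp A)) :=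
  ⟨ThmP.ipc0', ThmQ.ipc0⟩
end

section
/- ∨-Elimination: In the calculus with MP, IPC1, IPC2, and the Peirce scheme IPC0, if A ⊃ Q and B ⊃ Q are theorems, then ((A ⊃ B) ⊃ B) ⊃ Q is a theorem. -/
/-!
Under the hypothesis `(A ⊃ B) ⊃ B`, composing with `B ⊃ Q` gives `(A ⊃ B) ⊃ Q`, and precomposing
with `(Q ⊃ B) ⊃ (A ⊃ B)` (obtained from `A ⊃ Q`) gives `(Q ⊃ B) ⊃ Q`; Peirce's law turns this into `Q`.
-/

inductive Der (H : Fm) : Fm → Prop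
  | hyp : Der H H
  | thm {A : Fm} : ThmP A → Der H A
  | mp {A B : Fm} : Der H (A.imp B) → Der H A → Der H B

namespace ThmP

theorem imp_self_s8 (A : Fm) : ThmP (A.imp A) :=
  mp (mp (ipc2 A (A.imp A) A) (ipc1 A (A.imp A))) (ipc1 A A)

theorem imp_of_der {H C : Fm} (h : Der H C) : ThmP (H.imp C) := by
  induction h with
  | hyp => exact imp_self_s8 H
  | thm hC => exact mp (ipc1 _ H) hC
  | mp _ _ ihAB ihA => exact mp (mp (ipc2 _ _ _) ihAB) ihA

theorem imp_mono_right {A B C : Fm} (h : ThmP (B.imp C)) : ThmP ((A.imp B).imp (A.imp C)) :=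
  mp (ipc2 A B C) (mp (ipc1 _ A) h)

theorem trans {A B C : Fm} (hAB : ThmP (A.imp B)) (hBC : ThmP (B.imp C)) : ThmP (A.imp C) :=
  mp (imp_mono_right hBC) hAB

theorem imp_anti_left {A B C : Fm} (h : ThmP (A.imp B)) : ThmP ((B.imp C).imp (A.imp C)) :=
  imp_of_der <| .mp (.mp (.thm (ipc2 A B C)) (.mp (.thm (ipc1 _ A)) .hyp)) (.thm h)

end ThmP

theorem stmt_8 (A B Q : Fm) (hA : ThmP (A.imp Q)) (hB : ThmP (B.imp Q)) :
    ThmP (((A.imp B).imp B).imp Q) := by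
  have hAB_Q : ThmP (((A.imp B).imp B).imp ((A.imp B).imp Q)) := ThmP.imp_mono_right hB
  have hQB_Q : ThmP (((A.imp B).imp Q).imp ((Q.imp B).imp Q)) :=
    ThmP.imp_anti_left (ThmP.imp_anti_left hA)
  exact (hAB_Q.trans hQB_Q).trans (ThmP.ipc0 Q B)
end

section
/- In the calculus with MP, IPC1, IPC2, and the Peirce scheme, the formula (A ⊃ Q) ⊃ ((B ⊃ Q) ⊃ (((A ⊃ B) ⊃ B) ⊃ Q)) is a theorem for all formulas A, B, Q. -/
/-!
By Peirce's law `((Q ⊃ B) ⊃ Q) ⊃ Q` it suffices to derive `(Q ⊃ B) ⊃ Q` from the hypotheses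
`A ⊃ Q`, `B ⊃ Q`, `(A ⊃ B) ⊃ B`. Assuming `Q ⊃ B`, composing with `A ⊃ Q` gives `A ⊃ B`, hence `B`,
hence `Q`. The deduction theorem turns this natural-deduction argument into a Hilbert-style one.
-/

inductive Derivable (Γ : List Fm) : Fm → Prop
  | ax {A : Fm} : ThmP A → Derivable Γ A
  | hyp {A : Fm} : A ∈ Γ → Derivable Γ A
  | mp {A B : Fm} : Derivable Γ (A.imp B) → Derivable Γ A → Derivable Γ B

namespace Derivable

variable {Γ : List Fm} {A B : Fm}

theorem imp_intro (h : Derivable (A :: Γ) B) : Derivable Γ (A.imp B) := by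
  induction h with
  | ax hB => exact mp (ax (ThmP.ipc1 _ A)) (ax hB)
  | hyp hmem =>
    rcases List.mem_cons.mp hmem with rfl | hmem
    · exact ax (ThmP.imp_self _)
    · exact mp (ax (ThmP.ipc1 _ A)) (hyp hmem)
  | mp _ _ ihAB ihA => exact mp (mp (ax (ThmP.ipc2 A _ _)) ihAB) ihA

theorem imp_trans {C : Fm} (hAB : Derivable Γ (A.imp B)) (hBC : Derivable Γ (B.imp C)) :
    Derivable Γ (A.imp C) :=
  mp (mp (ax (ThmP.ipc2 A B C)) (mp (ax (ThmP.ipc1 _ A)) hBC)) hAB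

theorem thmP_of_nil (h : Derivable [] A) : ThmP A := by
  induction h with
  | ax hA => exact hA
  | hyp hmem => simp at hmem
  | mp _ _ ihAB ihA => exact ihAB.mp ihA

end Derivable

theorem stmt_9 (A B Q : Fm) :
    ThmP ((A.imp Q).imp ((B.imp Q).imp (((A.imp B).imp B).imp Q))) := by
  refine Derivable.thmP_of_nil (.imp_intro (.imp_intro (.imp_intro ?_)))
  refine .mp (.ax (ThmP.ipc0 Q B)) (.imp_intro ?_)
  set Γ := [Q.imp B, (A.imp B).imp B, B.imp Q, A.imp Q]
  have hQB : Derivable Γ (Q.imp B) := .hyp (by simp [Γ])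
  have hABB : Derivable Γ ((A.imp B).imp B) := .hyp (by simp [Γ])
  have hBQ : Derivable Γ (B.imp Q) := .hyp (by simp [Γ])
  have hAQ : Derivable Γ (A.imp Q) := .hyp (by simp [Γ])
  exact hBQ.mp (hABB.mp (hAQ.imp_trans hQB))
end

section
/- Suppose the calculus with MP, IPC1, IPC2 additionally validates the inference rule ∨E: whenever A ⊃ Q and B ⊃ Q are theorems, so is ((A ⊃ B) ⊃ B) ⊃ Q. Then every instance of the Peirce scheme ((A ⊃ B) ⊃ A) ⊃ A is a theorem. -/
inductive ThmV : Fm → Prop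
  | ipc1 (A B : Fm) : ThmV (A.imp (B.imp A))
  | ipc2 (A B C : Fm) : ThmV ((A.imp (B.imp C)).imp ((A.imp B).imp (A.imp C)))
  | mp {A B : Fm} : ThmV (A.imp B) → ThmV A → ThmV B
  | veeE {A B Q : Fm} : ThmV (A.imp Q) → ThmV (B.imp Q) → ThmV (((A.imp B).imp B).imp Q)

namespace ThmV

theorem imp_mp {A B C : Fm} (hBC : ThmV (A.imp (B.imp C))) (hB : ThmV (A.imp B)) :
    ThmV (A.imp C) :=
  mp (mp (ipc2 A B C) hBC) hB

theorem imp_of {A B : Fm} (hB : ThmV B) : ThmV (A.imp B) :=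
  mp (ipc1 B A) hB

theorem imp_self (A : Fm) : ThmV (A.imp A) :=
  imp_mp (ipc1 A (A.imp A)) (ipc1 A A)

theorem imp_trans {A B C : Fm} (hAB : ThmV (A.imp B)) (hBC : ThmV (B.imp C)) :
    ThmV (A.imp C) :=
  imp_mp (imp_of hBC) hAB

theorem imp_of_imp_imp {A C : Fm} (h : ThmV (A.imp (A.imp C))) : ThmV (A.imp C) :=
  imp_mp h (imp_self A)

theorem imp_imp_imp_self (A C : Fm) : ThmV (A.imp ((A.imp C).imp C)) :=
  imp_trans (ipc1 A (A.imp C)) (mp (ipc2 (A.imp C) A C) (imp_self (A.imp C)))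

end ThmV

theorem stmt_12 (A B : Fm) : ThmV (((A.imp B).imp A).imp A) := by
  have hA : ThmV (A.imp (((A.imp B).imp A).imp A)) := ThmV.ipc1 A _
  have hB : ThmV (B.imp (((A.imp B).imp A).imp A)) :=
    ThmV.imp_trans (ThmV.ipc1 B A) (ThmV.imp_imp_imp_self (A.imp B) A)
  have hOr : ThmV (((A.imp B).imp B).imp (((A.imp B).imp A).imp A)) := ThmV.veeE hA hB
  have hAntecedent : ThmV (((A.imp B).imp A).imp ((A.imp B).imp B)) :=
    ThmV.mp (ThmV.ipc2 (A.imp B) A B) (ThmV.imp_self (A.imp B))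
  exact ThmV.imp_of_imp_imp (ThmV.imp_trans hAntecedent hOr)
end

section
/- The Peirce axiom scheme is equivalent to binary suprema in the Lindenbaum poset: for the calculus with MP, IPC1, IPC2, all Peirce instances ((A ⊃ B) ⊃ A) ⊃ A are theorems if and only if for all formulas A, B the class of (A ⊃ B) ⊃ B is a supremum of [A] and [B] (i.e., ⊢ A ⊃ ((A ⊃ B) ⊃ B), ⊢ B ⊃ ((A ⊃ B) ⊃ B), and whenever ⊢ A ⊃ Q and ⊢ B ⊃ Q, also ⊢ ((A ⊃ B) ⊃ B) ⊃ Q). -/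
local infixr:25 " ⇒ " => Fm.imp

def Fm.sup (A B : Fm) : Fm := (A ⇒ B) ⇒ B

structure ImpTheory (T : Fm → Prop) : Prop where
  k : ∀ A B : Fm, T (A ⇒ B ⇒ A)
  s : ∀ A B C : Fm, T ((A ⇒ B ⇒ C) ⇒ (A ⇒ B) ⇒ A ⇒ C)
  mp : ∀ {A B : Fm}, T (A ⇒ B) → T A → T B

namespace ImpTheory

variable {T : Fm → Prop} (hT : ImpTheory T)
include hT

theorem imp_self (A : Fm) : T (A ⇒ A) :=
  hT.mp (hT.mp (hT.s A (A ⇒ A) A) (hT.k A (A ⇒ A))) (hT.k A A)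

theorem imp_of (A : Fm) {B : Fm} (hB : T B) : T (A ⇒ B) :=
  hT.mp (hT.k B A) hB

theorem imp_trans {A B C : Fm} (hAB : T (A ⇒ B)) (hBC : T (B ⇒ C)) : T (A ⇒ C) :=
  hT.mp (hT.mp (hT.s A B C) (hT.imp_of A hBC)) hAB

theorem imp_swap {A B C : Fm} (h : T (A ⇒ B ⇒ C)) : T (B ⇒ A ⇒ C) :=
  hT.imp_trans (hT.k B A) (hT.mp (hT.s A B C) h)

theorem imp_imp_imp_self (A B : Fm) : T (A ⇒ (A ⇒ B) ⇒ B) :=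
  hT.imp_swap (hT.imp_self (A ⇒ B))

theorem imp_imp_left {A Q : Fm} (B : Fm) (hAQ : T (A ⇒ Q)) : T ((Q ⇒ B) ⇒ A ⇒ B) :=
  hT.imp_trans (hT.k (Q ⇒ B) A) (hT.mp (hT.imp_swap (hT.s A Q B)) hAQ)

theorem imp_imp_right (X : Fm) {B Q : Fm} (hBQ : T (B ⇒ Q)) : T ((X ⇒ B) ⇒ X ⇒ Q) :=
  hT.mp (hT.s X B Q) (hT.imp_of X hBQ)

theorem imp_contract (A B : Fm) : T ((A ⇒ A ⇒ B) ⇒ A ⇒ B) :=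
  hT.mp (hT.imp_swap (hT.s A A B)) (hT.imp_self A)

theorem sup_imp_of_peirce {A B Q : Fm} (hpeirce : T (((Q ⇒ B) ⇒ Q) ⇒ Q))
    (hAQ : T (A ⇒ Q)) (hBQ : T (B ⇒ Q)) : T (A.sup B ⇒ Q) :=
  hT.imp_trans (hT.imp_imp_left B (hT.imp_imp_left B hAQ))
    (hT.imp_trans (hT.imp_imp_right (Q ⇒ B) hBQ) hpeirce)

theorem peirce_of_sup_imp {A B : Fm}
    (hsup : ∀ Q : Fm, T (A ⇒ Q) → T ((A ⇒ B) ⇒ Q) → T (A.sup (A ⇒ B) ⇒ Q)) :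
    T (((A ⇒ B) ⇒ A) ⇒ A) :=
  hT.mp (hsup _ (hT.k A _) (hT.imp_imp_imp_self (A ⇒ B) A)) (hT.imp_contract A B)

end ImpTheory

theorem stmt_18 (T : Fm → Prop)
    (h1 : ∀ A B : Fm, T (A.imp (B.imp A)))
    (h2 : ∀ A B C : Fm, T ((A.imp (B.imp C)).imp ((A.imp B).imp (A.imp C))))
    (hmp : ∀ A B : Fm, T (A.imp B) → T A → T B) :
    (∀ A B : Fm, T (((A.imp B).imp A).imp A)) ↔
    (∀ A B : Fm, T (A.imp ((A.imp B).imp B)) ∧ T (B.imp ((A.imp B).imp B)) ∧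
      ∀ Q : Fm, T (A.imp Q) → T (B.imp Q) → T (((A.imp B).imp B).imp Q)) := by
  have hT : ImpTheory T := ⟨h1, h2, hmp _ _⟩
  constructor
  · intro hpeirce A B
    exact ⟨hT.imp_imp_imp_self A B, hT.k B (A ⇒ B),
      fun Q hAQ hBQ => hT.sup_imp_of_peirce (hpeirce Q B) hAQ hBQ⟩
  · intro hsup A B
    exact hT.peirce_of_sup_imp (hsup A (A ⇒ B)).2.2
end
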